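/- Let X be a real (n−1)×2n matrix and L : NC_n → ℝ with Δ_I(X) = Σ_{σ ∈ E(I)} L_σ for every (n−1)-subset I ⊆ [2n]. Then for every 1 ≤ k < n−1 and all (n−1)-element subsets I = {i_1<⋯<i_{n−1}} and J = {j_1<⋯<j_{n−1}} of [2n]: Σ_{σ ∈ E(I), κ ∈ E(J)} L_σ·L_κ = Σ_{(I′,J′)} (−1)^{a(I′,J′)} Σ_{σ ∈ E(I′), κ ∈ E(J′)} L_σ·L_κ, where (I′,J′) ranges over all pairs of lists obtained by choosing k positions of I and exchanging the entries of I in those positions with the first k entries j_1,…,j_k of J (keeping all entries in their original positions), a(I′,J′) is the total number of adjacent transpositions needed to sort the two resulting lists into increasing order, and E(K) is taken to be empty whenever the list K has a repeated entry. -/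

import Mathlib

open Finset

noncomputable section
open scoped Classical

/-- The cyclic (clockwise) half-open interval `(a, b]` in `Fin m`. -/
def cIoc {m : ℕ} (a b : Fin m) : Finset (Fin m) :=
  univ.filter fun k => if a < b then a < k ∧ k ≤ b else a < k ∨ k ≤ b

/-- The open cyclic (clockwise) arc from `a` to `b` in `Fin m`, excluding both endpoints. -/
def cIoo {m : ℕ} (a b : Fin m) : Finset (Fin m) :=
  univ.filter fun k => if a < b then a < k ∧ k < b else (a < k ∨ k < b) ∧ k ≠ a ∧ k ≠ b

/-- Set partitions of `[n] = Fin n`. -/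
abbrev NCP (n : ℕ) := Finpartition (univ : Finset (Fin n))

/-- `a` and `b` lie in the same block of `σ`. -/
def sameBlock {n : ℕ} (σ : NCP n) (a b : Fin n) : Prop :=
  ∃ B ∈ σ.parts, a ∈ B ∧ b ∈ B

/-- `σ` is a noncrossing partition: there are no `a < b < c < d` with `a, c` in one
block and `b, d` in a different block. -/
def IsNoncrossing {n : ℕ} (σ : NCP n) : Prop :=
  ∀ a b c d : Fin n, a < b → b < c → c < d →
    sameBlock σ a c → sameBlock σ b d → sameBlock σ a b

/-- The relation defining the dual (Kreweras complement) partition: `ĩ ~ j̃` iff no block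
of `σ` meets both cyclic intervals `{(i+1), …, j}` and `{(j+1), …, i}`. -/
def dualRel {n : ℕ} (σ : NCP n) (i j : Fin n) : Prop :=
  i = j ∨ ¬ ∃ B ∈ σ.parts, (B ∩ cIoc i j).Nonempty ∧ (B ∩ cIoc j i).Nonempty

/-- The point `ī` of `[2n]` (0-based: `ī = 2i`). -/
def bar {n : ℕ} (i : Fin n) : Fin (2*n) := ⟨2*(i:ℕ), by have := i.isLt; omega⟩

/-- The point `ĩ` of `[2n]` (0-based: `ĩ = 2i+1`). -/
def til {n : ℕ} (i : Fin n) : Fin (2*n) := ⟨2*(i:ℕ)+1, by have := i.isLt; omega⟩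

/-- A matching (fixed-point-free involution) of `Fin m`. -/
def IsMatching {m : ℕ} (τ : Fin m → Fin m) : Prop :=
  Function.Involutive τ ∧ ∀ i, τ i ≠ i

/-- A noncrossing matching: there are no `a < b < c < d` with `τ a = c` and `τ b = d`. -/
def IsNCMatching {m : ℕ} (τ : Fin m → Fin m) : Prop :=
  ¬ ∃ a b c d : Fin m, a < b ∧ b < c ∧ c < d ∧ τ a = c ∧ τ b = d

/-- `j` is the cyclic predecessor of `i` in the block of `σ` containing `i`
(`j = i` when `i` is a singleton). -/
def cyclicPred {n : ℕ} (σ : NCP n) (j i : Fin n) : Prop :=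
  ∃ B ∈ σ.parts, i ∈ B ∧ j ∈ B ∧ ∀ x ∈ B, x ∉ cIoo j i

/-- `m` is the medial pairing of `σ`: it pairs `ī` (0-based `2i`) with `j̃` (0-based `2j+1`),
where `j` is the cyclic predecessor of `i` in its block. -/
def IsMedialOf {n : ℕ} (σ : NCP n) (m : Fin (2*n) → Fin (2*n)) : Prop :=
  ∀ i j : Fin n, m (bar i) = til j ↔ cyclicPred σ j i

/-- The crossing number of a matching: the number of pairs `{a,b}` with
`a < b < τ a < τ b`. -/
def crossNum {m : ℕ} (τ : Fin m → Fin m) : ℕ :=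
  ((univ : Finset (Fin m × Fin m)).filter fun p =>
    p.1 < p.2 ∧ p.2 < τ p.1 ∧ τ p.1 < τ p.2).card

/-- `a`, `b`, `c`, `d` are distinct and in cyclic order on `Fin m`. -/
def CyclicOrder4 {m : ℕ} (a b c d : Fin m) : Prop :=
  (a < b ∧ b < c ∧ c < d) ∨ (b < c ∧ c < d ∧ d < a) ∨
  (c < d ∧ d < a ∧ a < b) ∨ (d < a ∧ a < b ∧ b < c)

/-- `τ` covers `τ'` in the uncrossing order. -/
def UncrossCover {m : ℕ} (τ' τ : Fin m → Fin m) : Prop :=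
  IsMatching τ' ∧ IsMatching τ ∧
  ∃ a b c d : Fin m, CyclicOrder4 a b c d ∧ τ a = c ∧ τ b = d ∧
    (∀ x, x ≠ a → x ≠ b → x ≠ c → x ≠ d → τ' x = τ x) ∧
    ((τ' a = d ∧ τ' b = c ∧ ∀ x ∈ cIoo a b, τ x ∉ cIoo c d) ∨
     (τ' a = b ∧ τ' c = d ∧ ∀ x ∈ cIoo b c, τ x ∉ cIoo d a))

/-- The uncrossing partial order on matchings: reflexive-transitive closure of covers. -/
def uncrossLE {m : ℕ} (τ' τ : Fin m → Fin m) : Prop :=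
  Relation.ReflTransGen UncrossCover τ' τ

/-- An affine permutation of period `m`. -/
def IsAffinePerm (m : ℕ) (f : ℤ → ℤ) : Prop :=
  Function.Bijective f ∧ ∀ i : ℤ, f (i + m) = f i + m

/-- The length of an affine permutation of period `m`:
`#{(i,j) : 1 ≤ i ≤ m, i < j, f i > f j}`. -/
def affLen (m : ℕ) (f : ℤ → ℤ) : ℕ :=
  Set.ncard {p : ℤ × ℤ | 1 ≤ p.1 ∧ p.1 ≤ (m:ℤ) ∧ p.1 < p.2 ∧ f p.2 < f p.1}

/-- The affine rank matrix `r_f(i,j) = #{a ≤ i : f a ≥ j}`. -/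
def rankMat (f : ℤ → ℤ) (i j : ℤ) : ℕ :=
  Set.ncard {a : ℤ | a ≤ i ∧ j ≤ f a}

/-- Affine Bruhat order via rank matrices. -/
def bruhatLE (f g : ℤ → ℤ) : Prop := ∀ i j : ℤ, rankMat f i j ≤ rankMat g i j

/-- The sum `Σ_{i=1}^m (f i − i)`. -/
def windowSum (m : ℕ) (f : ℤ → ℤ) : ℤ :=
  ∑ i ∈ Finset.range m, (f ((i:ℤ)+1) - ((i:ℤ)+1))

/-- The affine permutation `g_τ` associated to a matching `τ` of `[2n]`:
on `[2n]`, `g_τ i = τ i` if `τ i > i` and `g_τ i = τ i + 2n` if `τ i < i`,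
extended periodically. -/
def gTau (n : ℕ) (τ : Fin (2*n) → Fin (2*n)) (i : ℤ) : ℤ :=
  if h : (i % ((2*n : ℕ) : ℤ)).toNat < 2*n then
    let r : Fin (2*n) := ⟨(i % ((2*n : ℕ) : ℤ)).toNat, h⟩
    (i - i % ((2*n : ℕ) : ℤ)) +
      (if r < τ r then ((τ r : ℕ) : ℤ) else ((τ r : ℕ) : ℤ) + 2*n)
  else i

/-- `f_τ = g_τ − 1`. -/
def fTau (n : ℕ) (τ : Fin (2*n) → Fin (2*n)) (i : ℤ) : ℤ := gTau n τ i - 1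

/-- An electrical affine permutation for `n`. -/
def IsElectrical (n : ℕ) (f : ℤ → ℤ) : Prop :=
  IsAffinePerm (2*n) f ∧
  (∀ i : ℤ, i ≤ f i ∧ f i ≤ i + 2*n - 2) ∧
  windowSum (2*n) f = ((n:ℤ) - 1) * (2*n) ∧
  ∀ i : ℤ, (f (f i + 1) - (i - 1)) % ((2*n : ℕ) : ℤ) = 0

/-- The Grassmann necklace subset `I_a(f) ⊆ [m]`: representatives in `[m]` (0-based) of
`{f b mod m : b < a and f b ≥ a}`. -/
def necklaceI (m : ℕ) (f : ℤ → ℤ) (a : ℤ) : Finset (Fin m) :=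
  univ.filter fun x => ∃ b : ℤ, b < a ∧ a ≤ f b ∧ f b % (m:ℤ) = ((x:ℕ):ℤ)

/-- The dual necklace subset `J_a(f) ⊆ [m]`: representatives in `[m]` (0-based) of
`{b mod m : b < a and f b ≥ a}`. -/
def necklaceJ (m : ℕ) (f : ℤ → ℤ) (a : ℤ) : Finset (Fin m) :=
  univ.filter fun x => ∃ b : ℤ, b < a ∧ a ≤ f b ∧ b % (m:ℤ) = ((x:ℕ):ℤ)

/-- Dominance order on `k`-element subsets of `Fin m`:
the `r`-th smallest element of `I` is at most the `r`-th smallest element of `J`. -/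
def domLE {m : ℕ} (k : ℕ) (I J : Finset (Fin m)) : Prop :=
  ∃ (hI : I.card = k) (hJ : J.card = k),
    ∀ r : Fin k, I.orderEmbOfFin hI r ≤ J.orderEmbOfFin hJ r

/-- `a`-shifted dominance order: rotate so that `a` becomes least, then compare. -/
def sdomLE {m : ℕ} (k : ℕ) (a : Fin m) (I J : Finset (Fin m)) : Prop :=
  domLE k (I.image (· - a)) (J.image (· - a))

/-- `a`-shifted lexicographic order on subsets of `Fin m`. -/
def lexLE {m : ℕ} (a : Fin m) (I J : Finset (Fin m)) : Prop :=
  I = J ∨ List.Lex (· < ·) ((I.image (· - a)).sort (· ≤ ·)) ((J.image (· - a)).sort (· ≤ ·))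

/-- A Catalan subset of `[2n]` (0-based): an `(n−1)`-subset such that the length-`2n`
word with `U` at positions `{0} ∪ {x+1 : x ∈ I}` and `D` elsewhere is a Dyck path. -/
def IsCatalan {n : ℕ} (I : Finset (Fin (2*n))) : Prop :=
  I.card = n - 1 ∧
  ∀ p : ℕ, p ≤ 2*n →
    p ≤ 2 * ((insert 0 (I.image fun x => (x:ℕ)+1)).filter (· < p)).card

/-- Catalan subset with respect to the shifted order `≤_a`. -/
def IsCatalanAt {n : ℕ} (a : Fin (2*n)) (I : Finset (Fin (2*n))) : Prop :=
  IsCatalan (I.image (· - a))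

/-- The set of maxima of `S` with respect to the `a`-shifted order. -/
def maxAt {m : ℕ} (a : Fin m) (S : Finset (Fin m)) : Finset (Fin m) :=
  S.filter fun x => ∀ y ∈ S, y - a ≤ x - a

/-- `I_a(σ)` for a noncrossing partition `σ`: the complement in `[2n]` of the set of
`≤_a`-maxima of the blocks of `σ` (embedded by `bar`) and of the blocks of the dual
partition `σ̃` (embedded by `til`). -/
def IaP {n : ℕ} (σ : NCP n) (a : Fin (2*n)) : Finset (Fin (2*n)) :=
  univ \ ((σ.parts.biUnion fun B => maxAt a (B.image bar)) ∪
          ((univ : Finset (Fin n)).biUnion fun i =>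
            maxAt a ((univ.filter (dualRel σ i)).image til)))

/-- `I` is concordant with `σ`: `I` has `n−1` elements and every block of `σ` and of
its dual `σ̃` contains exactly one element of `[2n] ∖ I`. -/
def Concordant {n : ℕ} (σ : NCP n) (I : Finset (Fin (2*n))) : Prop :=
  I.card = n - 1 ∧
  (∀ B ∈ σ.parts, ((B.image bar) ∩ (univ \ I)).card = 1) ∧
  (∀ i : Fin n, (((univ.filter (dualRel σ i)).image til) ∩ (univ \ I)).card = 1)

/-- `E(I)`: the set of noncrossing partitions concordant with `I`. -/
def ESet {n : ℕ} (I : Finset (Fin (2*n))) : Set (NCP n) :=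
  {σ | IsNoncrossing σ ∧ Concordant σ I}

/-- The maximal minor `Δ_I(X)` on the columns indexed by `I`, in increasing order. -/
def minorOn {k m : ℕ} (X : Matrix (Fin k) (Fin m) ℝ) (I : Finset (Fin m)) : ℝ :=
  if h : I.card = k then (X.submatrix id fun r => I.orderEmbOfFin h r).det else 0

/-- `X` is totally nonnegative: it has full rank `k` and all maximal minors are `≥ 0`. -/
def IsTNN {k m : ℕ} (X : Matrix (Fin k) (Fin m) ℝ) : Prop :=
  X.rank = k ∧ ∀ I : Finset (Fin m), I.card = k → 0 ≤ minorOn X I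

/-- `t` times the matrix unit `E_{p,q}` (0-based indices). -/
def matE (m : ℕ) (p q : ℕ) (t : ℝ) : Matrix (Fin m) (Fin m) ℝ :=
  Matrix.of fun r s => if (r:ℕ) = p ∧ (s:ℕ) = q then t else 0

/-- `x_i(t) = Id + t·E_{i,i+1}` (1-based index `i`). -/
def xB (m i : ℕ) (t : ℝ) : Matrix (Fin m) (Fin m) ℝ := 1 + matE m (i-1) i t

/-- `y_i(t) = Id + t·E_{i+1,i}` (1-based index `i`). -/
def yB (m i : ℕ) (t : ℝ) : Matrix (Fin m) (Fin m) ℝ := 1 + matE m i (i-1) t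

/-- `u_i(t) = x_i(t)·y_{i−1}(t)` (1-based index `i`). -/
def uB (m i : ℕ) (t : ℝ) : Matrix (Fin m) (Fin m) ℝ := xB m i t * yB m (i-1) t

/-- The columns of `X`, extended `n`-periodically to all integer indices (0-based). -/
def colP {k n : ℕ} (X : Matrix (Fin k) (Fin n) ℝ) (i : ℤ) : Fin k → ℝ :=
  fun r => if h : (i % (n:ℤ)).toNat < n then X r ⟨(i % (n:ℤ)).toNat, h⟩ else 0

/-- `f_X(i) = min { j ≥ i : v_i ∈ span(v_{i+1}, …, v_j) }` (0-based columns). -/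
def fX {k n : ℕ} (X : Matrix (Fin k) (Fin n) ℝ) (i : ℤ) : ℤ :=
  sInf {j : ℤ | i ≤ j ∧ colP X i ∈ Submodule.span ℝ (colP X '' Set.Ioc i j)}

/-- Fintype instance for finite partitions of a finite set. -/
instance {α : Type*} [DecidableEq α] [Fintype α] (s : Finset α) : Fintype (Finpartition s) :=
  Fintype.ofInjective Finpartition.parts fun _ _ h => Finpartition.ext h

/-- The sorted list of (the values of) a subset of `Fin m`. -/
def sortedL {m : ℕ} (I : Finset (Fin m)) : List ℕ :=
  (I.sort (· ≤ ·)).map Fin.val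

/-- The number of inversions of a list (= the number of adjacent transpositions
needed to sort it, when entries are distinct). -/
def invNum (l : List ℕ) : ℕ :=
  ((Finset.range l.length ×ˢ Finset.range l.length).filter fun pq =>
    pq.1 < pq.2 ∧ l.getD pq.2 0 < l.getD pq.1 0).card

/-- The subset of `Fin m` whose values lie in the list `l`. -/
def toFinF {m : ℕ} (l : List ℕ) : Finset (Fin m) :=
  univ.filter fun x => (x:ℕ) ∈ l

/-- The double sum `Σ_{σ ∈ E(l), κ ∈ E(l')} L σ · L κ`, where `E` of a list with a
repeated entry (or an out-of-range entry) is empty. -/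
def pairSum {n : ℕ} (L : NCP n → ℝ) (l l' : List ℕ) : ℝ :=
  if (l.Nodup ∧ ∀ x ∈ l, x < 2*n) ∧ (l'.Nodup ∧ ∀ x ∈ l', x < 2*n) then
    ∑ᶠ σ ∈ ESet (n := n) (toFinF l), ∑ᶠ κ ∈ ESet (n := n) (toFinF l'), L σ * L κ
  else 0

/-- The list obtained from `LI` by replacing its entries at the positions in `S`
(in increasing order of position) by the first `#S` entries of `LJ`. -/
def swapI (LI LJ : List ℕ) (S : Finset ℕ) : List ℕ :=
  (List.range LI.length).map fun p =>
    if p ∈ S then LJ.getD ((S.filter (· < p)).card) 0 else LI.getD p 0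

/-- The list obtained from `LJ` by replacing its first `#S` entries by the entries of
`LI` at the positions in `S`, in increasing order. -/
def swapJ (LI LJ : List ℕ) (S : Finset ℕ) : List ℕ :=
  (List.range LJ.length).map fun p =>
    if p < S.card then LI.getD ((S.sort (· ≤ ·)).getD p 0) 0 else LJ.getD p 0

/-!
Through `hL` both sides of the identity are sums of products of two maximal minors of `X`, and
a minor taken on a list of columns is `(-1) ^ invNum` times the minor on the sorted set. So the
statement is the Sylvester exchange identity
`det u * det w = ∑ₛ det (u with rows s₀ < ⋯ < s_{k-1} replaced by w₀, …, w_{k-1})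
  * det (w with rows 0, …, k-1 replaced by u_{s₀}, …, u_{s_{k-1}})`
for the row families `u`, `w` given by the columns of `X` listed by `I` and by `J`.

For `u = 1` this identity is a Laplace expansion along the first `k` rows of `w`. Both sides are
alternating in `w₀, …, w_{k-1}`, so it suffices to compare them on increasing tuples of basis
vectors, where only one summand survives. Multiplying every row on the right by `u` turns the
case `(1, a)` into the case `(u, a * u)`. A general `u` is replaced by `charmatrix (-u)` over
`R[X]`: its determinant `d` is monic, hence a non-zero-divisor, and `w * adj u * u = d • w`.
-/

namespace Function

theorem Injective.extend_update {α β γ : Type*} [DecidableEq α] [DecidableEq β] {f : α → β}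
    (hf : Injective f) (g : α → γ) (e : β → γ) (a : α) (c : γ) :
    extend f (update g a c) e = update (extend f g e) (f a) c := by
  funext b
  by_cases hb : ∃ a', f a' = b
  · obtain ⟨a', rfl⟩ := hb
    simp only [hf.extend_apply, update_apply, hf.eq_iff]
  · have hne : b ≠ f a := fun h => hb ⟨a, h.symm⟩
    rw [extend_apply' _ _ _ hb, update_of_ne hne, extend_apply' _ _ _ hb]

theorem Injective.extend_comp_self {α β γ : Type*} {f : α → β} (hf : Injective f)
    (g : β → γ) : extend f (g ∘ f) g = g := by
  funext b
  by_cases hb : ∃ a, f a = b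
  · obtain ⟨a, rfl⟩ := hb
    exact hf.extend_apply _ _ a
  · exact extend_apply' _ _ _ hb

end Function

namespace AlternatingMap

variable {R M N ι κ : Type*} [CommSemiring R] [AddCommMonoid M] [Module R M]
  [AddCommMonoid N] [Module R N]

instance : IsZeroApply (M [⋀^ι]→ₗ[R] N) (ι → M) N := ⟨zero_apply⟩

instance : IsAddApply (M [⋀^ι]→ₗ[R] N) (ι → M) N := ⟨add_apply⟩

def compExtend (f : M [⋀^ι]→ₗ[R] N) {e : κ → ι} (he : Function.Injective e) (z : ι → M) :
    M [⋀^κ]→ₗ[R] N where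
  toFun v := f (Function.extend e v z)
  map_update_add' v i x y := by simp only [he.extend_update, f.map_update_add]
  map_update_smul' v i c x := by simp only [he.extend_update, f.map_update_smul]
  map_eq_zero_of_eq' v i j hv hij :=
    f.map_eq_zero_of_eq _ (by rwa [he.extend_apply, he.extend_apply]) (he.ne hij)

@[simp]
theorem compExtend_apply (f : M [⋀^ι]→ₗ[R] N) {e : κ → ι} (he : Function.Injective e)
    (z : ι → M) (v : κ → M) : f.compExtend he z v = f (Function.extend e v z) := rfl

end AlternatingMap

theorem Module.Basis.ext_alternating_of_strictMono {R M N ι : Type*} [CommSemiring R]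
    [AddCommMonoid M] [Module R M] [AddCommGroup N] [Module R N] [LinearOrder ι] {k : ℕ}
    {f g : M [⋀^Fin k]→ₗ[R] N} (e : Basis ι R M)
    (h : ∀ t : Fin k → ι, StrictMono t → f (e ∘ t) = g (e ∘ t)) : f = g := by
  refine e.ext_alternating fun c hc => ?_
  set σ := Tuple.sort c
  have hmono : StrictMono (c ∘ σ) :=
    (Tuple.monotone_sort c).strictMono_of_injective (hc.comp σ.injective)
  have hc' : (fun i => e (c i)) = (e ∘ c ∘ σ) ∘ ⇑σ⁻¹ := by
    funext i; simp
  rw [hc', f.map_perm, g.map_perm, h _ hmono]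

theorem OrderEmbedding.eq_of_forall_mem_range {k m : ℕ} {s t : Fin k ↪o Fin m}
    (h : ∀ i, t i ∈ Set.range s) : t = s := by
  set S := univ.map s.toEmbedding
  have hS : S.card = k := by simp [S]
  have hsS : ∀ i, s i ∈ S := fun i => mem_map_of_mem _ (mem_univ i)
  have htS : ∀ i, t i ∈ S := fun i => by
    obtain ⟨j, hj⟩ := h i
    rw [← hj]; exact hsS j
  refine DFunLike.coe_injective ?_
  rw [orderEmbOfFin_unique hS htS t.strictMono, orderEmbOfFin_unique hS hsS s.strictMono]

theorem Equiv.Perm.sign_eq_neg_one_pow_card_inversions {r : ℕ} (π : Equiv.Perm (Fin r)) :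
    Equiv.Perm.sign π = (-1) ^ #{p : Fin r × Fin r | p.1 < p.2 ∧ π p.2 < π p.1} := by
  calc Equiv.Perm.sign π
      = ∏ j, ∏ i, if i < j ∧ π j < π i then (-1 : ℤˣ) else 1 := by
        rw [π.sign_eq_prod_prod_Iio]
        refine prod_congr rfl fun j _ => (prod_congr rfl fun i hi => ?_).trans
          (prod_subset (subset_univ _) fun i _ hi => if_neg fun h => hi (mem_Iio.2 h.1))
        have hij := mem_Iio.1 hi
        by_cases h : π i < π j
        · simp [hij, h, h.not_gt]
        · simp [hij, h, lt_of_le_of_ne (not_lt.1 h) (π.injective.ne hij.ne).symm]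
    _ = ∏ p : Fin r × Fin r, if p.1 < p.2 ∧ π p.2 < π p.1 then (-1 : ℤˣ) else 1 := by
        rw [Fintype.prod_prod_type_right]
    _ = _ := by rw [prod_ite, prod_const, prod_const_one, mul_one]

namespace Matrix

variable {R : Type*} [CommRing R] {m k : ℕ}

/-- The rows `u (s i)` and `w i` (`i < k`) trade places: the first factor is `u` with row `s i`
replaced by `w i`, the second is `w` with row `i` replaced by `u (s i)`. -/
def exchangeTerm (hk : k ≤ m) (s : Fin k ↪o Fin m) (u w : Fin m → Fin m → R) : R :=
  detRowAlternating (Function.extend s (w ∘ Fin.castLE hk) u) *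
    detRowAlternating (Function.extend (Fin.castLE hk) (u ∘ s) w)

theorem detRowAlternating_eq_sum_exchangeTerm_basisFun (hk : k ≤ m) (a : Fin m → Fin m → R) :
    detRowAlternating a = ∑ s : Fin k ↪o Fin m, exchangeTerm hk s (Pi.basisFun R (Fin m)) a := by
  have hι := Fin.castLE_injective hk
  set e := Pi.basisFun R (Fin m)
  have key : detRowAlternating.compExtend hι a = ∑ s : Fin k ↪o Fin m,
      detRowAlternating (Function.extend (Fin.castLE hk) (e ∘ s) a) •
        detRowAlternating.compExtend s.injective e := by
    refine e.ext_alternating_of_strictMono fun t ht => ?_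
    set t' : Fin k ↪o Fin m := OrderEmbedding.ofStrictMono t ht
    rw [_root_.sum_apply, Finset.sum_eq_single t']
    · simp [t', ht.injective.extend_comp_self, ← Pi.basisFun_det, e, Module.Basis.det_self]
    · intro s _ hst
      -- some row `t i` of the identity is kept and reappears as row `s i`
      obtain ⟨i, hi⟩ : ∃ i, t i ∉ Set.range s := by
        by_contra! h
        exact hst (OrderEmbedding.eq_of_forall_mem_range (t := t') h).symm
      have hne : s i ≠ t i := fun h => hi ⟨i, h⟩
      have hrows : Function.extend s (e ∘ t) e (s i) = Function.extend s (e ∘ t) e (t i) := by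
        rw [s.injective.extend_apply, Function.extend_apply' _ _ _ hi]
        rfl
      simp [detRowAlternating.map_eq_zero_of_eq _ hrows hne]
    · simp
  have := congrArg (fun f => f (a ∘ Fin.castLE hk)) key
  simpa [hι.extend_comp_self, _root_.sum_apply, exchangeTerm, mul_comm] using this

theorem detRowAlternating_vecMul {n : Type*} [Fintype n] [DecidableEq n]
    (v : n → n → R) (M : Matrix n n R) :
    detRowAlternating (fun p => v p ᵥ* M) = detRowAlternating v * M.det :=
  det_mul (of v) M

theorem exchangeTerm_vecMul (hk : k ≤ m) (s : Fin k ↪o Fin m) (u w : Fin m → Fin m → R)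
    (M : Matrix (Fin m) (Fin m) R) :
    exchangeTerm hk s (fun p => u p ᵥ* M) (fun p => w p ᵥ* M) =
      exchangeTerm hk s u w * M.det ^ 2 := by
  have hext : ∀ {κ : Type} (f : κ → Fin m) (v : κ → Fin m → R) (z : Fin m → Fin m → R),
      Function.extend f (fun i => v i ᵥ* M) (fun p => z p ᵥ* M) =
        fun p => Function.extend f v z p ᵥ* M :=
    fun f v z => funext fun p => (Function.apply_extend (· ᵥ* M) f z p).symm
  simp only [exchangeTerm, Function.comp_def, hext, detRowAlternating_vecMul]
  ring

theorem detRowAlternating_map {S : Type*} [CommRing S] (f : R →+* S) {n : Type*} [Fintype n]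
    [DecidableEq n] (v : n → n → R) :
    detRowAlternating (fun p => f ∘ v p) = f (detRowAlternating v) :=
  (f.map_det (of v)).symm

theorem exchangeTerm_map {S : Type*} [CommRing S] (f : R →+* S) (hk : k ≤ m)
    (s : Fin k ↪o Fin m) (u w : Fin m → Fin m → R) :
    exchangeTerm hk s (fun p => f ∘ u p) (fun p => f ∘ w p) = f (exchangeTerm hk s u w) := by
  rw [exchangeTerm, exchangeTerm, map_mul, ← detRowAlternating_map, ← detRowAlternating_map]
  congr 2 <;> funext p <;> exact (Function.apply_extend (f ∘ ·) _ _ p).symm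

theorem detRowAlternating_extend_smul {f : Fin k → Fin m} (hf : f.Injective)
    (a b : R) (v : Fin k → Fin m → R) (z : Fin m → Fin m → R) :
    detRowAlternating (Function.extend f (a • v) (b • z)) =
      a ^ k * b ^ (m - k) * detRowAlternating (Function.extend f v z) := by
  set S := univ.map ⟨f, hf⟩
  have hrows : Function.extend f (a • v) (b • z) =
      fun p => (if p ∈ S then a else b) • Function.extend f v z p := by
    funext p
    by_cases hp : ∃ i, f i = p
    · obtain ⟨i, rfl⟩ := hp
      simp [S, hf.extend_apply]
    · have hpS : p ∉ S := by simpa [S] using hp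
      simp [Function.extend_apply' _ _ _ hp, hpS]
  have hS : S.card = k := by simp [S]
  rw [hrows, AlternatingMap.map_smul_univ, Finset.prod_ite, prod_const, prod_const, smul_eq_mul]
  have hA : (univ.filter (· ∈ S)).card = k := by rw [filter_mem_eq_inter, univ_inter, hS]
  have hB : (univ.filter (· ∉ S)).card = m - k := by
    rw [filter_not, card_sdiff_of_subset (filter_subset _ _), hA, card_univ, Fintype.card_fin]
  rw [hA, hB]

theorem exchangeTerm_smul_right (hk : k ≤ m) (s : Fin k ↪o Fin m) (u w : Fin m → Fin m → R)
    (c : R) : exchangeTerm hk s u (c • w) = c ^ m * exchangeTerm hk s u w := by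
  have h1 := detRowAlternating_extend_smul s.injective c 1 (w ∘ Fin.castLE hk) u
  have h2 := detRowAlternating_extend_smul (Fin.castLE_injective hk) 1 c (u ∘ s) w
  simp only [one_smul, one_pow, mul_one, one_mul] at h1 h2
  rw [exchangeTerm, exchangeTerm, show (c • w) ∘ Fin.castLE hk = c • (w ∘ Fin.castLE hk) from rfl,
    h1, h2, ← pow_mul_pow_sub c hk]
  ring

theorem det_mul_det_vecMul_eq_sum_exchangeTerm (hk : k ≤ m) (u a : Fin m → Fin m → R) :
    detRowAlternating u * detRowAlternating (fun p => a p ᵥ* of u) =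
      ∑ s : Fin k ↪o Fin m, exchangeTerm hk s u (fun p => a p ᵥ* of u) := by
  have hu : (fun p => Pi.basisFun R (Fin m) p ᵥ* of u) = u := by
    funext p
    rw [Pi.basisFun_apply, single_one_vecMul]
    rfl
  symm
  calc ∑ s : Fin k ↪o Fin m, exchangeTerm hk s u (fun p => a p ᵥ* of u)
      = ∑ s : Fin k ↪o Fin m, exchangeTerm hk s (fun p => Pi.basisFun R (Fin m) p ᵥ* of u)
          (fun p => a p ᵥ* of u) := by rw [hu]
    _ = detRowAlternating a * detRowAlternating u ^ 2 := by
      simp only [exchangeTerm_vecMul, ← Finset.sum_mul,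
        ← detRowAlternating_eq_sum_exchangeTerm_basisFun]
      rfl
    _ = detRowAlternating u * detRowAlternating (fun p => a p ᵥ* of u) := by
      rw [detRowAlternating_vecMul]
      change _ = detRowAlternating u * (detRowAlternating a * detRowAlternating u)
      ring

open Polynomial in
theorem detRowAlternating_mul_eq_sum_exchangeTerm (hk : k ≤ m) (u w : Fin m → Fin m → R) :
    detRowAlternating u * detRowAlternating w = ∑ s : Fin k ↪o Fin m, exchangeTerm hk s u w := by
  -- `U` specializes to `u` at `X = 0`, and its determinant is monic
  set U : Fin m → Fin m → R[X] := charmatrix (-of u)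
  set W : Fin m → Fin m → R[X] := fun p => C ∘ w p
  set d := detRowAlternating U
  have hd : IsRegular d := (charpoly_monic (-of u)).isRegular
  have hW : (fun p => (of W * adjugate (of U)) p ᵥ* of U) = d • W := by
    funext p
    rw [← mul_apply_eq_vecMul, Matrix.mul_assoc, adjugate_mul, Matrix.mul_smul, Matrix.mul_one]
    rfl
  have hX : detRowAlternating U * detRowAlternating W =
      ∑ s : Fin k ↪o Fin m, exchangeTerm hk s U W := by
    have := det_mul_det_vecMul_eq_sum_exchangeTerm hk U (of W * adjugate (of U))
    have hdW : detRowAlternating (d • W) = d ^ m * detRowAlternating W := by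
      have := det_smul (of W) d
      rw [Fintype.card_fin] at this
      exact this
    simp only [hW, exchangeTerm_smul_right, ← Finset.mul_sum, hdW] at this
    exact (hd.pow m).left (by linear_combination this)
  have hU : (fun p => Polynomial.eval 0 ∘ U p) = u := by
    funext p q
    by_cases hpq : p = q <;> simp [U, hpq]
  have hW0 : (fun p => Polynomial.eval 0 ∘ W p) = w := by
    funext p q
    simp [W]
  have := congrArg (Polynomial.evalRingHom 0) hX
  simpa [map_mul, map_sum, ← exchangeTerm_map, ← detRowAlternating_map, hU, hW0] using this

end Matrix

section ColumnLists

variable {R : Type*} [CommRing R] {r N : ℕ}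

def natCol (X : Matrix (Fin r) (Fin N) R) (c : ℕ) : Fin r → R :=
  fun i => if h : c < N then X i ⟨c, h⟩ else 0

def listCols (X : Matrix (Fin r) (Fin N) R) (l : List ℕ) : Fin r → Fin r → R :=
  fun p => natCol X (l.getD p 0)

theorem invNum_eq_card {l : List ℕ} (hl : l.length = r) :
    invNum l = #{p : Fin r × Fin r | p.1 < p.2 ∧ l.getD p.2 0 < l.getD p.1 0} := by
  symm
  refine card_bij (fun p _ => ((p.1 : ℕ), (p.2 : ℕ))) ?_ ?_ ?_
  · intro p hp
    simp only [mem_filter, mem_univ, true_and] at hp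
    simp only [mem_filter, mem_product, mem_range]
    exact ⟨⟨by omega, by omega⟩, hp⟩
  · intro p _ q _ h
    simp only [Prod.mk.injEq] at h
    exact Prod.ext (Fin.ext h.1) (Fin.ext h.2)
  · intro q hq
    simp only [mem_filter, mem_product, mem_range] at hq
    exact ⟨(⟨q.1, by omega⟩, ⟨q.2, by omega⟩), by simpa using hq.2, rfl⟩

theorem det_submatrix_eq_neg_one_pow_mul_minorOn (X : Matrix (Fin r) (Fin N) ℝ)
    {f : Fin r → Fin N} (hf : f.Injective) :
    (X.submatrix id f).det =
      (-1) ^ #{p : Fin r × Fin r | p.1 < p.2 ∧ f p.2 < f p.1} * minorOn X (univ.image f) := by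
  have hT : (univ.image f).card = r := by rw [card_image_of_injective _ hf, card_fin]
  set t := (univ.image f).orderEmbOfFin hT
  set σ := Tuple.sort f
  have hsorted : f ∘ σ = t :=
    orderEmbOfFin_unique hT (fun i => mem_image_of_mem f (mem_univ _))
      ((Tuple.monotone_sort f).strictMono_of_injective (hf.comp σ.injective))
  have hf' : ∀ i, f i = t (σ⁻¹ i) := fun i => by
    simp [← hsorted]
  have hinv : ∀ i j, σ⁻¹ j < σ⁻¹ i ↔ f j < f i := fun i j => by
    rw [hf', hf', t.lt_iff_lt]
  have hM : X.submatrix id f = (X.submatrix id t).submatrix id ⇑σ⁻¹ := by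
    ext i j; simp [hf']
  rw [minorOn, dif_pos hT, hM, Matrix.det_permute', Equiv.Perm.sign_eq_neg_one_pow_card_inversions]
  simp only [hinv]
  push_cast
  rfl

theorem detRowAlternating_listCols_of_nodup (X : Matrix (Fin r) (Fin N) ℝ) {l : List ℕ}
    (hnd : l.Nodup) (hl : l.length = r) (hN : ∀ x ∈ l, x < N) :
    Matrix.detRowAlternating (listCols X l) = (-1) ^ invNum l * minorOn X (toFinF l) := by
  have hget : ∀ p : Fin r, l.getD p 0 = l[(p : ℕ)]'(by omega) := fun p =>
    List.getD_eq_getElem _ _ _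
  set f : Fin r → Fin N := fun p => ⟨l.getD p 0, hN _ (by rw [hget]; exact List.getElem_mem _)⟩
  have hf : f.Injective := by
    intro p q h
    have h' : l[(p : ℕ)]'(by omega) = l[(q : ℕ)]'(by omega) := by
      rw [← hget, ← hget]; exact congrArg Fin.val h
    exact Fin.ext ((hnd.getElem_inj_iff).1 h')
  have hcols : listCols X l = Matrix.transpose (X.submatrix id f) := by
    ext p i
    exact dif_pos (f p).isLt
  have himage : univ.image f = toFinF l := by
    ext x
    simp only [mem_image, mem_univ, true_and, toFinF, mem_filter, List.mem_iff_getElem, f,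
      Fin.ext_iff, hget]
    constructor
    · rintro ⟨p, hp⟩; exact ⟨p, by omega, hp⟩
    · rintro ⟨p, hp, hpx⟩; exact ⟨⟨p, by omega⟩, hpx⟩
  rw [hcols, ← Matrix.det, Matrix.det_transpose, det_submatrix_eq_neg_one_pow_mul_minorOn X hf,
    himage, invNum_eq_card hl]
  simp only [f, Fin.lt_def]

theorem detRowAlternating_listCols_of_not_nodup (X : Matrix (Fin r) (Fin N) R) {l : List ℕ}
    (hl : l.length = r) (hnd : ¬ l.Nodup) : Matrix.detRowAlternating (listCols X l) = 0 := by
  obtain ⟨a, b, hab, hne⟩ := Function.not_injective_iff.1 (mt List.nodup_iff_injective_get.2 hnd)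
  refine Matrix.detRowAlternating.map_eq_zero_of_eq _ (i := Fin.cast hl a) (j := Fin.cast hl b)
    ?_ (by simpa [Fin.ext_iff] using hne)
  simp only [listCols, Fin.val_cast, List.getD_eq_getElem _ _ a.isLt,
    List.getD_eq_getElem _ _ b.isLt]
  exact congrArg (natCol X) hab

theorem card_toFinF {l : List ℕ} (hnd : l.Nodup) (hN : ∀ x ∈ l, x < N) :
    (toFinF l : Finset (Fin N)).card = l.length := by
  rw [← List.toFinset_card_of_nodup hnd, ← card_map Fin.valEmbedding]
  congr 1
  ext x
  simp only [mem_map, toFinF, mem_filter, mem_univ, true_and, Fin.valEmbedding_apply,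
    List.mem_toFinset]
  exact ⟨fun ⟨y, hy, hyx⟩ => hyx ▸ hy, fun hx => ⟨⟨x, hN x hx⟩, hx, rfl⟩⟩

theorem detRowAlternating_listCols_mul_eq_pairSum {n : ℕ}
    (X : Matrix (Fin (n-1)) (Fin (2*n)) ℝ) (L : NCP n → ℝ)
    (hL : ∀ I : Finset (Fin (2*n)), I.card = n-1 → minorOn X I = ∑ᶠ σ ∈ ESet I, L σ)
    {l l' : List ℕ} (hl : l.length = n-1) (hl' : l'.length = n-1)
    (hN : ∀ x ∈ l, x < 2*n) (hN' : ∀ x ∈ l', x < 2*n) :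
    Matrix.detRowAlternating (listCols X l) * Matrix.detRowAlternating (listCols X l') =
      (-1) ^ (invNum l + invNum l') * pairSum L l l' := by
  by_cases hnd : l.Nodup
  · by_cases hnd' : l'.Nodup
    · rw [pairSum, if_pos ⟨⟨hnd, hN⟩, hnd', hN'⟩, detRowAlternating_listCols_of_nodup X hnd hl hN,
        detRowAlternating_listCols_of_nodup X hnd' hl' hN', hL _ (by rw [card_toFinF hnd hN, hl]),
        hL _ (by rw [card_toFinF hnd' hN', hl']), pow_add]
      simp_rw [← mul_finsum_mem]
      rw [← finsum_mem_mul]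
      ring
    · rw [detRowAlternating_listCols_of_not_nodup X hl' hnd', pairSum,
        if_neg fun h => hnd' h.2.1]
      ring
  · rw [detRowAlternating_listCols_of_not_nodup X hl hnd, pairSum, if_neg fun h => hnd h.1.1]
    ring

end ColumnLists

section ExchangedLists

variable {R : Type*} [CommRing R] {m k N : ℕ}

theorem card_image_orderEmbedding (s : Fin k ↪o Fin m) :
    #(univ.image fun i => (s i : ℕ)) = k := by
  rw [card_image_of_injective (f := fun i => (s i : ℕ)) _ (Fin.val_injective.comp s.injective),
    card_fin]

theorem sum_powersetCard_range_eq_sum_orderEmbedding {M : Type*} [AddCommMonoid M]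
    (F : Finset ℕ → M) :
    ∑ S ∈ (range m).powersetCard k, F S =
      ∑ s : Fin k ↪o Fin m, F (univ.image fun i => (s i : ℕ)) := by
  symm
  refine sum_bij (fun s _ => univ.image fun i => (s i : ℕ)) ?_ ?_ ?_ (fun _ _ => rfl)
  · intro s _
    refine mem_powersetCard.2 ⟨fun x hx => ?_, ?_⟩
    · obtain ⟨i, -, rfl⟩ := mem_image.1 hx
      exact mem_range.2 (s i).isLt
    · exact card_image_orderEmbedding s
  · intro s _ t _ h
    refine (OrderEmbedding.eq_of_forall_mem_range fun i => ?_).symm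
    have : (t i : ℕ) ∈ univ.image fun i => (s i : ℕ) := h ▸ mem_image_of_mem _ (mem_univ i)
    obtain ⟨j, -, hj⟩ := mem_image.1 this
    exact ⟨j, Fin.ext hj⟩
  · intro S hS
    obtain ⟨hSm, hSk⟩ := mem_powersetCard.1 hS
    have hlt : ∀ i, S.orderEmbOfFin hSk i < m := fun i =>
      mem_range.1 (hSm (orderEmbOfFin_mem S hSk i))
    refine ⟨OrderEmbedding.ofStrictMono (fun i => ⟨_, hlt i⟩)
      fun i j hij => (S.orderEmbOfFin hSk).strictMono hij, mem_univ _, ?_⟩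
    ext x
    simp only [mem_image, mem_univ, true_and]
    rw [← Finset.mem_coe, ← range_orderEmbOfFin S hSk]
    rfl

theorem card_filter_lt_image_orderEmbedding (s : Fin k ↪o Fin m) (i : Fin k) :
    #{x ∈ univ.image (fun j => (s j : ℕ)) | x < (s i : ℕ)} = i := by
  have : {x ∈ univ.image (fun j => (s j : ℕ)) | x < (s i : ℕ)} =
      (Iio i).image fun j => (s j : ℕ) := by
    ext x
    simp only [mem_filter, mem_image, mem_univ, true_and, mem_Iio]
    constructor
    · rintro ⟨⟨j, rfl⟩, hj⟩
      exact ⟨j, s.lt_iff_lt.1 hj, rfl⟩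
    · rintro ⟨j, hj, rfl⟩
      exact ⟨⟨j, rfl⟩, s.lt_iff_lt.2 hj⟩
  rw [this, card_image_of_injective (f := fun j => (s j : ℕ)) _
    (Fin.val_injective.comp s.injective), Fin.card_Iio]

theorem sort_image_orderEmbedding_getD (s : Fin k ↪o Fin m) (i : Fin k) :
    ((univ.image fun i => (s i : ℕ)).sort (· ≤ ·)).getD i 0 = s i := by
  have h := card_image_orderEmbedding s
  have hs : (fun i => (s i : ℕ)) = (univ.image fun i => (s i : ℕ)).orderEmbOfFin h :=
    orderEmbOfFin_unique h (fun i => mem_image_of_mem _ (mem_univ i))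
      fun i j hij => s.strictMono hij
  rw [List.getD_eq_getElem _ _ (by simp [h]), congrFun hs i, orderEmbOfFin_apply]
  rfl

theorem swapI_getD (LI LJ : List ℕ) (hLI : LI.length = m) (s : Fin k ↪o Fin m) (p : Fin m) :
    (swapI LI LJ (univ.image fun i => (s i : ℕ))).getD p 0 =
      Function.extend s (fun i => LJ.getD i 0) (fun p => LI.getD p 0) p := by
  rw [swapI, List.getD_eq_getElem _ _ (by simp [hLI]), List.getElem_map, List.getElem_range]
  by_cases hp : ∃ i, s i = p
  · obtain ⟨i, rfl⟩ := hp
    simp [s.injective.extend_apply, card_filter_lt_image_orderEmbedding]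
  · have hp' : (p : ℕ) ∉ univ.image fun i => (s i : ℕ) := by
      simpa [Fin.ext_iff] using hp
    simp [Function.extend_apply' _ _ _ hp, hp']

theorem swapJ_getD (hk : k ≤ m) (LI LJ : List ℕ) (hLJ : LJ.length = m) (s : Fin k ↪o Fin m)
    (q : Fin m) :
    (swapJ LI LJ (univ.image fun i => (s i : ℕ))).getD q 0 =
      Function.extend (Fin.castLE hk) (fun i => LI.getD (s i) 0) (fun q => LJ.getD q 0) q := by
  rw [swapJ, List.getD_eq_getElem _ _ (by simp [hLJ]), List.getElem_map, List.getElem_range,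
    card_image_orderEmbedding]
  by_cases hq : (q : ℕ) < k
  · rw [if_pos hq, show q = Fin.castLE hk ⟨q, hq⟩ from rfl,
      (Fin.castLE_injective hk).extend_apply]
    exact congrArg (LI.getD · 0) (sort_image_orderEmbedding_getD s ⟨q, hq⟩)
  · have hq' : ¬∃ i, Fin.castLE hk i = q := by
      rintro ⟨i, rfl⟩; exact hq i.isLt
    rw [if_neg hq, Function.extend_apply' _ _ _ hq']

theorem exchangeTerm_listCols (hk : k ≤ m) (X : Matrix (Fin m) (Fin N) R) {LI LJ : List ℕ}
    (hLI : LI.length = m) (hLJ : LJ.length = m) (s : Fin k ↪o Fin m) :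
    Matrix.exchangeTerm hk s (listCols X LI) (listCols X LJ) =
      Matrix.detRowAlternating (listCols X (swapI LI LJ (univ.image fun i => (s i : ℕ)))) *
        Matrix.detRowAlternating (listCols X (swapJ LI LJ (univ.image fun i => (s i : ℕ)))) := by
  rw [Matrix.exchangeTerm]
  congr 2 <;> funext p
  · rw [listCols, swapI_getD LI LJ hLI, Function.apply_extend (natCol X)]; rfl
  · rw [listCols, swapJ_getD hk LI LJ hLJ, Function.apply_extend (natCol X)]; rfl

theorem List.getD_lt_of_forall_lt {l : List ℕ} (hl : ∀ x ∈ l, x < N) (hN : 0 < N) (i : ℕ) :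
    l.getD i 0 < N := by
  rw [List.getD_eq_getElem?_getD]
  cases h : l[i]? with
  | none => exact hN
  | some x => exact hl x (List.mem_of_getElem? h)

theorem swapI_lt {LI LJ : List ℕ} (hI : ∀ x ∈ LI, x < N) (hJ : ∀ x ∈ LJ, x < N) (hN : 0 < N)
    (S : Finset ℕ) : ∀ x ∈ swapI LI LJ S, x < N := by
  simp only [swapI, List.mem_map]
  rintro x ⟨p, -, rfl⟩
  split_ifs
  exacts [List.getD_lt_of_forall_lt hJ hN _, List.getD_lt_of_forall_lt hI hN _]

theorem swapJ_lt {LI LJ : List ℕ} (hI : ∀ x ∈ LI, x < N) (hJ : ∀ x ∈ LJ, x < N) (hN : 0 < N)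
    (S : Finset ℕ) : ∀ x ∈ swapJ LI LJ S, x < N := by
  simp only [swapJ, List.mem_map]
  rintro x ⟨p, -, rfl⟩
  split_ifs
  exacts [List.getD_lt_of_forall_lt hI hN _, List.getD_lt_of_forall_lt hJ hN _]

theorem swapI_length (LI LJ : List ℕ) (S : Finset ℕ) : (swapI LI LJ S).length = LI.length := by
  simp [swapI]

theorem swapJ_length (LI LJ : List ℕ) (S : Finset ℕ) : (swapJ LI LJ S).length = LJ.length := by
  simp [swapJ]

theorem sortedL_length (I : Finset (Fin N)) : (sortedL I).length = I.card := by
  simp [sortedL]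

theorem sortedL_lt (I : Finset (Fin N)) : ∀ x ∈ sortedL I, x < N := by
  simp only [sortedL, List.mem_map]
  rintro x ⟨y, -, rfl⟩
  exact y.isLt

theorem invNum_sortedL (I : Finset (Fin N)) : invNum (sortedL I) = 0 := by
  have hsorted : (sortedL I).Pairwise (· < ·) :=
    List.Pairwise.map _ (fun _ _ h => h) (sortedLT_sort I).pairwise
  rw [invNum, card_eq_zero, filter_eq_empty_iff]
  rintro ⟨p, q⟩ hpq ⟨hlt, hinv⟩
  simp only [mem_product, mem_range] at hpq
  rw [List.getD_eq_getElem _ _ hpq.1, List.getD_eq_getElem _ _ hpq.2] at hinv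
  exact (List.pairwise_iff_getElem.1 hsorted p q hpq.1 hpq.2 hlt).asymm hinv

end ExchangedLists

theorem stmt19_general (n : ℕ) (X : Matrix (Fin (n-1)) (Fin (2*n)) ℝ) (L : NCP n → ℝ)
    (hL : ∀ I : Finset (Fin (2*n)), I.card = n-1 → minorOn X I = ∑ᶠ σ ∈ ESet I, L σ)
    (k : ℕ) (hk2 : k < n - 1)
    (I J : Finset (Fin (2*n))) (hI : I.card = n-1) (hJ : J.card = n-1) :
    pairSum L (sortedL I) (sortedL J) =
      ∑ S ∈ (Finset.range (n-1)).powersetCard k,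
        (-1 : ℝ) ^ (invNum (swapI (sortedL I) (sortedL J) S) +
                    invNum (swapJ (sortedL I) (sortedL J) S)) *
          pairSum L (swapI (sortedL I) (sortedL J) S) (swapJ (sortedL I) (sortedL J) S) := by
  have hN : 0 < 2 * n := by omega
  have hLI : (sortedL I).length = n - 1 := by rw [sortedL_length, hI]
  have hLJ : (sortedL J).length = n - 1 := by rw [sortedL_length, hJ]
  have hNI := sortedL_lt I
  have hNJ := sortedL_lt J
  have key := @detRowAlternating_listCols_mul_eq_pairSum n X L hL
  calc pairSum L (sortedL I) (sortedL J)
      = Matrix.detRowAlternating (listCols X (sortedL I)) *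
          Matrix.detRowAlternating (listCols X (sortedL J)) := by
        rw [key hLI hLJ hNI hNJ, invNum_sortedL, invNum_sortedL, pow_zero, one_mul]
    _ = ∑ s : Fin k ↪o Fin (n - 1),
          Matrix.exchangeTerm hk2.le s (listCols X (sortedL I)) (listCols X (sortedL J)) :=
        Matrix.detRowAlternating_mul_eq_sum_exchangeTerm hk2.le _ _
    _ = ∑ S ∈ (range (n - 1)).powersetCard k,
          Matrix.detRowAlternating (listCols X (swapI (sortedL I) (sortedL J) S)) *
            Matrix.detRowAlternating (listCols X (swapJ (sortedL I) (sortedL J) S)) := by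
        rw [sum_powersetCard_range_eq_sum_orderEmbedding]
        exact sum_congr rfl fun s _ => exchangeTerm_listCols hk2.le X hLI hLJ s
    _ = _ := sum_congr rfl fun S _ => key (by rw [swapI_length, hLI]) (by rw [swapJ_length, hLJ])
          (swapI_lt hNI hNJ hN S) (swapJ_lt hNI hNJ hN S)

theorem stmt19 (n : ℕ) (X : Matrix (Fin (n-1)) (Fin (2*n)) ℝ) (L : NCP n → ℝ)
    (hL : ∀ I : Finset (Fin (2*n)), I.card = n-1 → minorOn X I = ∑ᶠ σ ∈ ESet I, L σ)
    (k : ℕ) (hk1 : 1 ≤ k) (hk2 : k < n - 1)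
    (I J : Finset (Fin (2*n))) (hI : I.card = n-1) (hJ : J.card = n-1) :
    pairSum L (sortedL I) (sortedL J) =
      ∑ S ∈ (Finset.range (n-1)).powersetCard k,
        (-1 : ℝ) ^ (invNum (swapI (sortedL I) (sortedL J) S) +
                    invNum (swapJ (sortedL I) (sortedL J) S)) *
          pairSum L (swapI (sortedL I) (sortedL J) S) (swapJ (sortedL I) (sortedL J) S) :=
  stmt19_general n X L hL k hk2 I J hI hJ
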